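/- Uniform Hessian bound (Corollary 2.12). Fix n ≥ 2, constants C_E ≥ 1 and C_S > 0, positive numbers r₀, r₁ with r₁ ≤ r₀ and 3r₀ ≤ 1, a point x₁ ∈ ℝⁿ with ‖x₁‖ = 2r₀, α > 0, and δ > 0 satisfying δ ≤ r₀^{α+2}/α. Set w(x) := ‖x‖^{−α}. Let x_* be a point of the open ball B(x₁, r₁) and let φ₀, φ₁ be C² functions defined on a neighborhood of x_* such that: (a) f := (φ₁ − φ₀) + δ·w has a local maximum at x_*; (b) D²φ₁(x_*) ≥ −C_S·I; (c) there is an n×n symmetric matrix A with (1/C_E)·I ≤ A ≤ C_E·I and trace(A · D²φ₀(x_*)) ≤ 2C_E. Then |D²φ₀|(x_*) + |D²φ₁|(x_*) ≤ C_H, where C_H := 2( C_E²((n−1)(C_S + 1) + 2) + 1 ) depends only on C_E, C_S and n. -/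

import Mathlib

/-!
Along every line `t ↦ x_* + t v` the function `f` has a local maximum at `t = 0`, so its second
derivative there is nonpositive. The second derivative of `‖·‖^{-α}` in direction `v` is at least
`-α ‖x_*‖^{-α-2} ‖v‖²`, and `‖x_*‖ ≥ r₀`, `δ ≤ r₀^{α+2}/α` make `δ` times it at least `-‖v‖²`.
Hence `D²φ₁ - D²φ₀ ≤ I`, so `D²φ₀ ≥ -(C_S + 1) I`. Writing `D²φ₀ = Σ λ_k u_k u_kᵀ`, the trace
condition reads `Σ λ_k ⟪u_k, A u_k⟫ ≤ 2 C_E`; each term is at least `-(C_S + 1) C_E`, while a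
positive `λ_k` contributes at least `λ_k / C_E`, so `λ_k ≤ K := C_E² ((n - 1)(C_S + 1) + 2)`.
Thus `D²φ₀ ≤ K I` and `D²φ₁ ≤ (K + 1) I`, and by polarisation `-c I ≤ M ≤ B I` with `c ≤ B`
bounds every entry of a symmetric `M` by `B`.
-/

open scoped BigOperators

noncomputable section

abbrev Euc (n : ℕ) := EuclideanSpace ℝ (Fin n)

/-- Second partial derivative `D_{ij}u`. -/
def pd2 (n : ℕ) (i j : Fin n) (u : Euc n → ℝ) (x : Euc n) : ℝ :=
  fderiv ℝ (fun y => fderiv ℝ u y (EuclideanSpace.single j 1)) x (EuclideanSpace.single i 1)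

/-- Hessian matrix `D²u`. -/
def hessM (n : ℕ) (u : Euc n → ℝ) (x : Euc n) : Matrix (Fin n) (Fin n) ℝ :=
  Matrix.of fun i j => pd2 n i j u x

/-- `|D²u|(x) = max_{i,j} |D_{ij}u(x)|`. -/
def hessMax (n : ℕ) (u : Euc n → ℝ) (x : Euc n) : ℝ :=
  ⨆ i : Fin n, ⨆ j : Fin n, |pd2 n i j u x|

open Filter Topology Finset
open scoped MatrixOrder

def HasSecondDerivAt (g : ℝ → ℝ) (c t : ℝ) : Prop :=
  ∃ g' : ℝ → ℝ, (∀ᶠ s in 𝓝 t, HasDerivAt g (g' s) s) ∧ HasDerivAt g' c t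

namespace HasSecondDerivAt

variable {f g : ℝ → ℝ} {a b t : ℝ}

theorem add (hf : HasSecondDerivAt f a t) (hg : HasSecondDerivAt g b t) :
    HasSecondDerivAt (fun s => f s + g s) (a + b) t := by
  obtain ⟨f', hf', hf''⟩ := hf
  obtain ⟨g', hg', hg''⟩ := hg
  exact ⟨fun s => f' s + g' s, hf'.and hg' |>.mono fun s h => h.1.add h.2, hf''.add hg''⟩

theorem sub (hf : HasSecondDerivAt f a t) (hg : HasSecondDerivAt g b t) :
    HasSecondDerivAt (fun s => f s - g s) (a - b) t := by
  obtain ⟨f', hf', hf''⟩ := hf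
  obtain ⟨g', hg', hg''⟩ := hg
  exact ⟨fun s => f' s - g' s, hf'.and hg' |>.mono fun s h => h.1.sub h.2, hf''.sub hg''⟩

theorem const_mul (c : ℝ) (hf : HasSecondDerivAt f a t) :
    HasSecondDerivAt (fun s => c * f s) (c * a) t := by
  obtain ⟨f', hf', hf''⟩ := hf
  exact ⟨fun s => c * f' s, hf'.mono fun s h => h.const_mul c, hf''.const_mul c⟩

/-- Subtracting `a/4 (s - t)²` turns a positive second derivative into a local minimum, which is
incompatible with a local maximum. -/
theorem nonpos_of_isLocalMax (hf : HasSecondDerivAt f a t) (hmax : IsLocalMax f t) : a ≤ 0 := by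
  obtain ⟨f', hf', hf''⟩ := hf
  by_contra! ha
  set g : ℝ → ℝ := fun s => f s - a / 4 * (s - t) ^ 2
  have hg' : ∀ᶠ s in 𝓝 t, HasDerivAt g (f' s - a / 2 * (s - t)) s := by
    filter_upwards [hf'] with s hs
    have hq := (((hasDerivAt_id' s).sub_const t).fun_pow 2).const_mul (a / 4)
    exact (hs.sub hq).congr_deriv (by push_cast; ring)
  have hg'' : HasDerivAt (deriv g) (a / 2) t := by
    have h := hf''.sub (((hasDerivAt_id' t).sub_const t).const_mul (a / 2))
    rw [mul_one, sub_half] at h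
    exact h.congr_of_eventuallyEq (hg'.mono fun s hs => hs.deriv)
  have hmin : IsLocalMin g t := by
    refine isLocalMin_of_deriv_deriv_pos (by rw [hg''.deriv]; positivity) ?_
      (hg'.self_of_nhds.continuousAt)
    rw [hg'.self_of_nhds.deriv, hmax.hasDerivAt_eq_zero hf'.self_of_nhds]
    simp
  obtain ⟨s, hs, hst⟩ := ((hmin.and hmax).filter_mono nhdsWithin_le_nhds |>.and
    self_mem_nhdsWithin).exists (f := 𝓝[≠] t)
  have : 0 < a / 4 * (s - t) ^ 2 := by
    have : s - t ≠ 0 := sub_ne_zero.2 hst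
    positivity
  simp only [g] at hs
  linarith [hs.1, hs.2]

end HasSecondDerivAt

theorem ContDiffAt.differentiableAt_fderiv {𝕜 E F : Type*} [NontriviallyNormedField 𝕜]
    [NormedAddCommGroup E] [NormedSpace 𝕜 E] [NormedAddCommGroup F] [NormedSpace 𝕜 F]
    {u : E → F} {x : E} (hu : ContDiffAt 𝕜 2 u x) : DifferentiableAt 𝕜 (fderiv 𝕜 u) x :=
  (hu.fderiv_right (m := 1) (by norm_num)).differentiableAt (by simp)

theorem ContDiffAt.hasSecondDerivAt_comp_line {E : Type*} [NormedAddCommGroup E]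
    [NormedSpace ℝ E] {u : E → ℝ} {x : E} (hu : ContDiffAt ℝ 2 u x) (v : E) :
    HasSecondDerivAt (fun t => u (x + t • v)) (fderiv ℝ (fderiv ℝ u) x v v) 0 := by
  have hline : ∀ t : ℝ, HasDerivAt (fun s : ℝ => x + s • v) v t := fun t => by
    simpa using ((hasDerivAt_id t).smul_const v).const_add x
  have hx : Tendsto (fun s : ℝ => x + s • v) (𝓝 0) (𝓝 x) := by
    simpa using (hline 0).continuousAt.tendsto
  refine ⟨fun t => fderiv ℝ u (x + t • v) v, ?_, ?_⟩
  · filter_upwards [hx.eventually (hu.eventually (by simp))] with t ht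
    exact (ht.differentiableAt (by simp)).hasFDerivAt.comp_hasDerivAt t (hline t)
  · have hcomp : HasDerivAt (fun t : ℝ => fderiv ℝ u (x + t • v)) (fderiv ℝ (fderiv ℝ u) x v) 0 :=
      hu.differentiableAt_fderiv.hasFDerivAt.comp_hasDerivAt_of_eq 0 (hline 0) (by simp)
    exact (ContinuousLinearMap.apply ℝ ℝ v).hasFDerivAt.comp_hasDerivAt 0 hcomp

theorem hasSecondDerivAt_rpow_quadratic {a : ℝ} (ha : 0 < a) (b c e : ℝ) :
    HasSecondDerivAt (fun t => (a + b * t + c * t ^ 2) ^ e)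
      (2 * c * e * a ^ (e - 1) + e * (e - 1) * b ^ 2 * a ^ (e - 2)) 0 := by
  set Q : ℝ → ℝ := fun t => a + b * t + c * t ^ 2
  have hQ : ∀ t, HasDerivAt Q (b + 2 * c * t) t := fun t => by
    have := (((hasDerivAt_id' t).const_mul b).const_add a).add ((hasDerivAt_pow 2 t).const_mul c)
    exact this.congr_deriv (by push_cast; ring)
  have hQpos : ∀ᶠ t in 𝓝 0, 0 < Q t :=
    (hQ 0).continuousAt.eventually (lt_mem_nhds (by simpa [Q] using ha))
  refine ⟨fun t => (b + 2 * c * t) * e * Q t ^ (e - 1), ?_, ?_⟩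
  · filter_upwards [hQpos] with t ht
    exact (hQ t).rpow_const (Or.inl ht.ne')
  · have hQ0 : Q 0 = a := by simp [Q]
    have h := ((((hasDerivAt_id' 0).const_mul (2 * c)).const_add b).mul_const e).fun_mul
      ((hQ 0).rpow_const (p := e - 1) (Or.inl (by simp [hQ0, ha.ne'])))
    refine h.congr_deriv ?_
    rw [hQ0, sub_sub, one_add_one_eq_two]
    ring

open RealInnerProductSpace in
theorem hasSecondDerivAt_norm_add_smul_rpow {E : Type*} [NormedAddCommGroup E]
    [InnerProductSpace ℝ E] {x : E} (hx : x ≠ 0) (v : E) (p : ℝ) :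
    HasSecondDerivAt (fun t => ‖x + t • v‖ ^ p)
      (p * ‖x‖ ^ (p - 2) * ‖v‖ ^ 2 + p * (p - 2) * ‖x‖ ^ (p - 4) * ⟪x, v⟫ ^ 2) 0 := by
  have hsq : ∀ y : E, ∀ q : ℝ, (‖y‖ ^ 2) ^ q = ‖y‖ ^ (2 * q) := fun y q => by
    rw [← Real.rpow_natCast, ← Real.rpow_mul (norm_nonneg y), Nat.cast_ofNat]
  have hline : ∀ t : ℝ, ‖x + t • v‖ ^ p = (‖x‖ ^ 2 + 2 * ⟪x, v⟫ * t + ‖v‖ ^ 2 * t ^ 2) ^ (p / 2) :=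
    fun t => by
      have h : ‖x + t • v‖ ^ 2 = ‖x‖ ^ 2 + 2 * ⟪x, v⟫ * t + ‖v‖ ^ 2 * t ^ 2 := by
        rw [norm_add_sq_real, inner_smul_right, norm_smul, Real.norm_eq_abs, mul_pow, sq_abs]
        ring
      rw [← h, hsq, mul_div_cancel₀ _ two_ne_zero]
  have hx2 : 0 < ‖x‖ ^ 2 := by positivity
  have h := hasSecondDerivAt_rpow_quadratic hx2 (2 * ⟪x, v⟫) (‖v‖ ^ 2) (p / 2)
  simp only [← hline, hsq] at h
  rw [show 2 * (p / 2 - 1) = p - 2 by ring, show 2 * (p / 2 - 2) = p - 4 by ring] at h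
  convert h using 1
  ring

open RealInnerProductSpace in
theorem IsLocalMax.fderiv_fderiv_sub_le {E : Type*} [NormedAddCommGroup E]
    [InnerProductSpace ℝ E] {φ₀ φ₁ : E → ℝ} {x : E} {α δ : ℝ} (hx : x ≠ 0) (hα : 0 ≤ α)
    (hδ : 0 ≤ δ) (hφ₀ : ContDiffAt ℝ 2 φ₀ x) (hφ₁ : ContDiffAt ℝ 2 φ₁ x)
    (hmax : IsLocalMax (fun y => (φ₁ y - φ₀ y) + δ * ‖y‖ ^ (-α)) x) (v : E) :
    fderiv ℝ (fderiv ℝ φ₁) x v v - fderiv ℝ (fderiv ℝ φ₀) x v v ≤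
      δ * α * ‖x‖ ^ (-α - 2) * ‖v‖ ^ 2 := by
  have hline := ((hφ₁.hasSecondDerivAt_comp_line v).sub (hφ₀.hasSecondDerivAt_comp_line v)).add
    ((hasSecondDerivAt_norm_add_smul_rpow hx v (-α)).const_mul δ)
  have hmax_line : IsLocalMax
      (fun t : ℝ => (φ₁ (x + t • v) - φ₀ (x + t • v)) + δ * ‖x + t • v‖ ^ (-α)) 0 := by
    have h : IsLocalMax (fun y => (φ₁ y - φ₀ y) + δ * ‖y‖ ^ (-α)) (x + (0 : ℝ) • v) := by
      simpa using hmax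
    exact h.comp_continuous (g := fun t : ℝ => x + t • v) (by fun_prop)
  have hsecond := hline.nonpos_of_isLocalMax hmax_line
  have hcross : 0 ≤ δ * (-α * (-α - 2) * ‖x‖ ^ (-α - 4) * ⟪x, v⟫ ^ 2) := by
    have : 0 ≤ -α * (-α - 2) := by nlinarith
    positivity
  linear_combination hsecond + hcross

theorem le_of_sum_mul_le {ι : Type*} [Fintype ι] {l a : ι → ℝ} {c Λ T : ℝ} (hc : 0 ≤ c)
    (hΛ : 0 < Λ) (hT : 0 ≤ T) (hl : ∀ j, -c ≤ l j) (ha₁ : ∀ j, 1 / Λ ≤ a j)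
    (ha₂ : ∀ j, a j ≤ Λ) (hsum : ∑ j, l j * a j ≤ T) (k : ι) :
    l k ≤ Λ * (T + (Fintype.card ι - 1) * c * Λ) := by
  classical
  have : Nonempty ι := ⟨k⟩
  have hcard : (1 : ℝ) ≤ Fintype.card ι := Nat.one_le_cast.2 Fintype.card_pos
  rcases le_or_gt (l k) 0 with hk | hk
  · have : 0 ≤ (Fintype.card ι - 1) * c * Λ := by
      have := sub_nonneg.2 hcard
      positivity
    nlinarith
  have hterm : ∀ j, -(c * Λ) ≤ l j * a j := fun j => by
    rcases le_or_gt 0 (l j) with hj | hj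
    · have : 0 ≤ a j := (one_div_pos.2 hΛ).le.trans (ha₁ j)
      nlinarith
    · nlinarith [ha₂ j, hl j]
  have hrest : (Fintype.card ι - 1) * -(c * Λ) ≤ ∑ j ∈ univ.erase k, l j * a j := by
    have := card_nsmul_le_sum (univ.erase k) _ _ fun j _ => hterm j
    rwa [nsmul_eq_mul, card_erase_of_mem (mem_univ k), card_univ,
      Nat.cast_pred Fintype.card_pos] at this
  have hk_le : l k / Λ ≤ l k * a k := by
    rw [div_eq_mul_one_div]
    exact mul_le_mul_of_nonneg_left (ha₁ k) hk.le
  rw [← add_sum_erase _ _ (mem_univ k)] at hsum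
  rw [← div_le_iff₀' hΛ]
  linarith

theorem mul_mul_rpow_neg_le_one {r ρ α δ : ℝ} (hr : 0 < r) (hrρ : r ≤ ρ) (hα : 0 < α)
    (hδα : δ ≤ r ^ (α + 2) / α) : δ * α * ρ ^ (-α - 2) ≤ 1 := by
  have hρ : 0 < ρ := hr.trans_le hrρ
  rw [show -α - 2 = -(α + 2) by ring, Real.rpow_neg hρ.le, ← div_eq_mul_inv,
    div_le_one (Real.rpow_pos_of_pos hρ _)]
  calc δ * α ≤ r ^ (α + 2) := (le_div_iff₀ hα).1 hδα
    _ ≤ ρ ^ (α + 2) := Real.rpow_le_rpow hr.le hrρ (by linarith)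

namespace Matrix

variable {ι : Type*} [Fintype ι] {A B M : Matrix ι ι ℝ}

theorem dotProduct_mulVec_le_of_le (h : A ≤ B) (x : ι → ℝ) :
    x ⬝ᵥ A *ᵥ x ≤ x ⬝ᵥ B *ᵥ x := by
  have := (le_iff.mp h).dotProduct_mulVec_nonneg x
  rwa [star_trivial, sub_mulVec, dotProduct_sub, sub_nonneg] at this

theorem le_of_dotProduct_mulVec_le (hA : A.IsHermitian) (hB : B.IsHermitian)
    (h : ∀ x, x ⬝ᵥ A *ᵥ x ≤ x ⬝ᵥ B *ᵥ x) : A ≤ B :=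
  PosSemidef.of_dotProduct_mulVec_nonneg (hB.sub hA) fun x => by
    rw [star_trivial, sub_mulVec, dotProduct_sub, sub_nonneg]
    exact h x

theorem dotProduct_smul_one_mulVec [DecidableEq ι] (c : ℝ) (x : ι → ℝ) :
    x ⬝ᵥ (c • (1 : Matrix ι ι ℝ)) *ᵥ x = c * (x ⬝ᵥ x) := by
  rw [smul_mulVec, one_mulVec, dotProduct_smul, smul_eq_mul]

namespace IsHermitian

variable [DecidableEq ι] (hM : M.IsHermitian)
include hM

theorem le_smul_one_of_eigenvalues_le {K : ℝ} (h : ∀ k, hM.eigenvalues k ≤ K) :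
    M ≤ K • 1 := by
  rw [← Algebra.algebraMap_eq_smul_one]
  refine le_algebraMap_of_spectrum_le ?_ hM
  rw [hM.spectrum_real_eq_range_eigenvalues]
  rintro _ ⟨k, rfl⟩
  exact h k

theorem eigenvalues_eq_dotProduct (k : ι) :
    hM.eigenvalues k = ⇑(hM.eigenvectorBasis k) ⬝ᵥ M *ᵥ ⇑(hM.eigenvectorBasis k) := by
  simpa using hM.eigenvalues_eq k

theorem dotProduct_self_eigenvectorBasis (k : ι) :
    ⇑(hM.eigenvectorBasis k) ⬝ᵥ ⇑(hM.eigenvectorBasis k) = 1 := by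
  have := real_inner_self_eq_norm_sq (hM.eigenvectorBasis k)
  rw [EuclideanSpace.inner_eq_star_dotProduct, hM.eigenvectorBasis.orthonormal.1 k] at this
  simpa using this

theorem trace_mul_eq_sum (A : Matrix ι ι ℝ) :
    (A * M).trace = ∑ k, hM.eigenvalues k *
      (⇑(hM.eigenvectorBasis k) ⬝ᵥ A *ᵥ ⇑(hM.eigenvectorBasis k)) := by
  set U : Matrix ι ι ℝ := (hM.eigenvectorUnitary : Matrix ι ι ℝ)
  have hU : U * star U = 1 := Unitary.mul_star_self_of_mem hM.eigenvectorUnitary.2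
  calc (A * M).trace = (star U * (A * M) * U).trace := by
        rw [trace_mul_cycle, hU, one_mul]
    _ = _ := by
        simp only [trace, diag_apply]
        refine Finset.sum_congr rfl fun k _ => ?_
        rw [mul_mul_apply, star_eq_conjTranspose, conjTranspose_eq_transpose_of_trivial,
          ← mulVec_mulVec]
        simp only [U, eigenvectorUnitary_transpose_apply, mulVec_eigenvectorBasis, mulVec_smul,
          dotProduct_smul, smul_eq_mul]

theorem le_smul_one_of_trace_mul_le {A : Matrix ι ι ℝ} {c Λ T : ℝ} (hc : 0 ≤ c) (hΛ : 0 < Λ)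
    (hT : 0 ≤ T) (hMc : -(c • 1) ≤ M) (hA₁ : (1 / Λ) • 1 ≤ A) (hA₂ : A ≤ Λ • 1)
    (htr : (A * M).trace ≤ T) :
    M ≤ (Λ * (T + (Fintype.card ι - 1) * c * Λ)) • 1 := by
  set u := fun k => ⇑(hM.eigenvectorBasis k)
  have hquad : ∀ (a : ℝ) (k : ι), u k ⬝ᵥ (a • 1 : Matrix ι ι ℝ) *ᵥ u k = a :=
    fun a k => by rw [dotProduct_smul_one_mulVec, hM.dotProduct_self_eigenvectorBasis, mul_one]
  refine hM.le_smul_one_of_eigenvalues_le (le_of_sum_mul_le hc hΛ hT (fun j => ?_) (fun j => ?_)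
    (fun j => ?_) (hM.trace_mul_eq_sum A ▸ htr))
  · rw [hM.eigenvalues_eq_dotProduct, ← hquad (-c) j, neg_smul]
    exact dotProduct_mulVec_le_of_le hMc _
  · rw [← hquad (1 / Λ) j]
    exact dotProduct_mulVec_le_of_le hA₁ _
  · rw [← hquad Λ j]
    exact dotProduct_mulVec_le_of_le hA₂ _

end IsHermitian

theorem abs_apply_le_of_le_smul_one [DecidableEq ι] (hM : M.IsHermitian) {c B : ℝ} (hcB : c ≤ B)
    (hlow : -(c • 1) ≤ M) (hhigh : M ≤ B • 1) (i j : ι) : |M i j| ≤ B := by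
  set x : ι → ℝ := Pi.single i 1 + Pi.single j 1
  set y : ι → ℝ := Pi.single i 1 - Pi.single j 1
  have hsymm : M j i = M i j := by simpa using hM.apply i j
  have hpolar : x ⬝ᵥ M *ᵥ x - y ⬝ᵥ M *ᵥ y = 4 * M i j := by
    simp only [x, y, mulVec_add, mulVec_sub, dotProduct_add, dotProduct_sub, add_dotProduct,
      sub_dotProduct, mulVec_single_one, single_one_dotProduct, col_apply, hsymm]
    ring
  have hpar : x ⬝ᵥ x + y ⬝ᵥ y = 4 := by
    simp only [x, y, dotProduct_add, dotProduct_sub, add_dotProduct, sub_dotProduct,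
      single_one_dotProduct, Pi.single_eq_same]
    ring
  have hx := dotProduct_mulVec_le_of_le hhigh x
  have hx' := dotProduct_mulVec_le_of_le hlow x
  have hy := dotProduct_mulVec_le_of_le hhigh y
  have hy' := dotProduct_mulVec_le_of_le hlow y
  rw [← neg_smul, dotProduct_smul_one_mulVec] at hx' hy'
  rw [dotProduct_smul_one_mulVec] at hx hy
  have hB : B * (x ⬝ᵥ x) + B * (y ⬝ᵥ y) = 4 * B := by rw [← mul_add, hpar, mul_comm]
  have hcx := mul_le_mul_of_nonneg_right hcB (star_trivial x ▸ dotProduct_self_star_nonneg x)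
  have hcy := mul_le_mul_of_nonneg_right hcB (star_trivial y ▸ dotProduct_self_star_nonneg y)
  rw [abs_le]
  constructor <;> linarith

end Matrix

section Hessian

open Matrix

variable {n : ℕ} {u : Euc n → ℝ} {x : Euc n}

theorem pd2_eq_fderiv_fderiv (hu : DifferentiableAt ℝ (fderiv ℝ u) x) (i j : Fin n) :
    pd2 n i j u x =
      fderiv ℝ (fderiv ℝ u) x (EuclideanSpace.single i 1) (EuclideanSpace.single j 1) := by
  rw [pd2, fderiv_clm_apply hu (differentiableAt_const _)]
  simp

theorem hessM_isHermitian (hu : ContDiffAt ℝ 2 u x) : (hessM n u x).IsHermitian := by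
  refine Matrix.isHermitian_iff_isSymm.2 (Matrix.IsSymm.ext fun i j => ?_)
  simp only [hessM, Matrix.of_apply, pd2_eq_fderiv_fderiv hu.differentiableAt_fderiv]
  exact hu.isSymmSndFDerivAt (by simp [minSmoothness_of_isRCLikeNormedField]) _ _

theorem dotProduct_hessM_mulVec (hu : ContDiffAt ℝ 2 u x) (v : Fin n → ℝ) :
    v ⬝ᵥ hessM n u x *ᵥ v = fderiv ℝ (fderiv ℝ u) x (WithLp.toLp 2 v) (WithLp.toLp 2 v) := by
  have hv : WithLp.toLp 2 v = ∑ i, v i • EuclideanSpace.single i (1 : ℝ) := by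
    ext j
    simp [Pi.single_apply]
  rw [hv]
  simp only [map_sum, map_smul, _root_.sum_apply, _root_.smul_apply, smul_eq_mul, dotProduct,
    mulVec, hessM, of_apply, pd2_eq_fderiv_fderiv hu.differentiableAt_fderiv, Finset.mul_sum]
  rw [Finset.sum_comm]
  exact Finset.sum_congr rfl fun i _ => Finset.sum_congr rfl fun j _ => by ring

theorem hessMax_le_of_le_smul_one (hu : ContDiffAt ℝ 2 u x) {c B : ℝ} (hc : 0 ≤ c) (hcB : c ≤ B)
    (hlow : -(c • 1) ≤ hessM n u x) (hhigh : hessM n u x ≤ B • 1) : hessMax n u x ≤ B := by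
  have hB : 0 ≤ B := hc.trans hcB
  refine Real.iSup_le (fun i => Real.iSup_le (fun j => ?_) hB) hB
  exact abs_apply_le_of_le_smul_one (hessM_isHermitian hu) hcB hlow hhigh i j

theorem hessM_sub_le_of_isLocalMax {φ₀ φ₁ : Euc n → ℝ} {α δ : ℝ} (hx : x ≠ 0) (hα : 0 ≤ α)
    (hδ : 0 ≤ δ) (hweight : δ * α * ‖x‖ ^ (-α - 2) ≤ 1) (hφ₀ : ContDiffAt ℝ 2 φ₀ x)
    (hφ₁ : ContDiffAt ℝ 2 φ₁ x) (hmax : IsLocalMax (fun y => (φ₁ y - φ₀ y) + δ * ‖y‖ ^ (-α)) x) :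
    hessM n φ₁ x - hessM n φ₀ x ≤ 1 := by
  refine le_of_dotProduct_mulVec_le ((hessM_isHermitian hφ₁).sub (hessM_isHermitian hφ₀))
    isHermitian_one fun v => ?_
  rw [sub_mulVec, dotProduct_sub, one_mulVec, dotProduct_hessM_mulVec hφ₁,
    dotProduct_hessM_mulVec hφ₀]
  calc _ ≤ δ * α * ‖x‖ ^ (-α - 2) * ‖WithLp.toLp 2 v‖ ^ 2 :=
        hmax.fderiv_fderiv_sub_le hx hα hδ hφ₀ hφ₁ _
    _ ≤ ‖WithLp.toLp 2 v‖ ^ 2 := mul_le_of_le_one_left (sq_nonneg _) hweight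
    _ = v ⬝ᵥ v := by
        rw [← real_inner_self_eq_norm_sq, EuclideanSpace.inner_eq_star_dotProduct, star_trivial]

end Hessian

theorem uniform_hessian_bound_general
    (n : ℕ) (hn : 2 ≤ n) (CE CS : ℝ) (hCE : 1 ≤ CE) (hCS : 0 < CS)
    (r₀ r₁ : ℝ) (hr₀ : 0 < r₀) (hr₁r₀ : r₁ ≤ r₀)
    (x₁ : Euc n) (hx₁ : ‖x₁‖ = 2 * r₀)
    (α δ : ℝ) (hα : 0 < α) (hδ : 0 < δ) (hδα : δ ≤ r₀ ^ (α + 2) / α)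
    (w : Euc n → ℝ) (hw : ∀ x, w x = ‖x‖ ^ (-α))
    (xst : Euc n) (hxst : xst ∈ Metric.ball x₁ r₁)
    (φ₀ φ₁ : Euc n → ℝ) (hφ₀ : ContDiffAt ℝ 2 φ₀ xst) (hφ₁ : ContDiffAt ℝ 2 φ₁ xst)
    (hmax : IsLocalMax (fun x => (φ₁ x - φ₀ x) + δ * w x) xst)
    (hhess₁ : (hessM n φ₁ xst + CS • (1 : Matrix (Fin n) (Fin n) ℝ)).PosSemidef)
    (hA : ∃ A : Matrix (Fin n) (Fin n) ℝ, A.IsSymm ∧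
      (A - (1 / CE) • (1 : Matrix (Fin n) (Fin n) ℝ)).PosSemidef ∧
      (CE • (1 : Matrix (Fin n) (Fin n) ℝ) - A).PosSemidef ∧
      (A * hessM n φ₀ xst).trace ≤ 2 * CE) :
    hessMax n φ₀ xst + hessMax n φ₁ xst ≤
      2 * (CE ^ 2 * (((n : ℝ) - 1) * (CS + 1) + 2) + 1) := by
  obtain rfl : w = fun y => ‖y‖ ^ (-α) := funext hw
  obtain ⟨A, -, hA₁, hA₂, htr⟩ := hA
  have hr₀x : r₀ ≤ ‖xst‖ := by
    rw [Metric.mem_ball, dist_eq_norm, norm_sub_rev] at hxst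
    linarith [norm_sub_norm_le x₁ xst]
  have hgap := hessM_sub_le_of_isLocalMax (norm_pos_iff.1 (hr₀.trans_le hr₀x)) hα.le hδ.le
    (mul_mul_rpow_neg_le_one hr₀ hr₀x hα hδα) hφ₀ hφ₁ hmax
  have h₁low : -(CS • 1) ≤ hessM n φ₁ xst := by rwa [Matrix.le_iff, sub_neg_eq_add]
  have h₀low : -((CS + 1) • 1) ≤ hessM n φ₀ xst := by
    rw [add_smul, one_smul, neg_add]
    exact (sub_le_sub_right h₁low 1).trans (sub_le_comm.1 hgap)
  set K := CE ^ 2 * (((n : ℝ) - 1) * (CS + 1) + 2)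
  have h₀high : hessM n φ₀ xst ≤ K • 1 := by
    convert (hessM_isHermitian hφ₀).le_smul_one_of_trace_mul_le (by linarith) (by linarith)
      (by linarith) h₀low hA₁ hA₂ htr using 2
    simp only [K, Fintype.card_fin]
    ring
  have h₁high : hessM n φ₁ xst ≤ (K + 1) • 1 := by
    rw [add_smul, one_smul, add_comm]
    exact (sub_le_iff_le_add.1 hgap).trans (add_le_add_right h₀high 1)
  have hCSK : CS + 1 ≤ K := by
    have hn₁ : (1 : ℝ) ≤ n - 1 := le_sub_iff_add_le.2 (by norm_num; exact_mod_cast hn)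
    calc CS + 1 ≤ ((n : ℝ) - 1) * (CS + 1) + 2 := by nlinarith
      _ ≤ K := le_mul_of_one_le_left (by nlinarith) (one_le_pow₀ hCE)
  linarith [hessMax_le_of_le_smul_one hφ₀ (by linarith) hCSK h₀low h₀high,
    hessMax_le_of_le_smul_one hφ₁ hCS.le (by linarith) h₁low h₁high]

/-- Corollary 2.12: uniform Hessian bound when `δ ≤ r₀^{α+2}/α`. -/
theorem uniform_hessian_bound
    (n : ℕ) (hn : 2 ≤ n) (CE CS : ℝ) (hCE : 1 ≤ CE) (hCS : 0 < CS)
    (r₀ r₁ : ℝ) (hr₀ : 0 < r₀) (hr₁ : 0 < r₁) (hr₁r₀ : r₁ ≤ r₀) (h3r₀ : 3 * r₀ ≤ 1)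
    (x₁ : Euc n) (hx₁ : ‖x₁‖ = 2 * r₀)
    (α δ : ℝ) (hα : 0 < α) (hδ : 0 < δ) (hδα : δ ≤ r₀ ^ (α + 2) / α)
    (w : Euc n → ℝ) (hw : ∀ x, w x = ‖x‖ ^ (-α))
    (xst : Euc n) (hxst : xst ∈ Metric.ball x₁ r₁)
    (φ₀ φ₁ : Euc n → ℝ) (hφ₀ : ContDiffAt ℝ 2 φ₀ xst) (hφ₁ : ContDiffAt ℝ 2 φ₁ xst)
    (hmax : IsLocalMax (fun x => (φ₁ x - φ₀ x) + δ * w x) xst)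
    (hhess₁ : (hessM n φ₁ xst + CS • (1 : Matrix (Fin n) (Fin n) ℝ)).PosSemidef)
    (hA : ∃ A : Matrix (Fin n) (Fin n) ℝ, A.IsSymm ∧
      (A - (1 / CE) • (1 : Matrix (Fin n) (Fin n) ℝ)).PosSemidef ∧
      (CE • (1 : Matrix (Fin n) (Fin n) ℝ) - A).PosSemidef ∧
      (A * hessM n φ₀ xst).trace ≤ 2 * CE) :
    hessMax n φ₀ xst + hessMax n φ₁ xst ≤
      2 * (CE ^ 2 * (((n : ℝ) - 1) * (CS + 1) + 2) + 1) :=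
  uniform_hessian_bound_general n hn CE CS hCE hCS r₀ r₁ hr₀ hr₁r₀ x₁ hx₁ α δ hα hδ hδα w hw xst
    hxst φ₀ φ₁ hφ₀ hφ₁ hmax hhess₁ hA
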